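/- With the notation above, define H_j(x) := ∫_{x̂_0}^x π^* ∂_{θ_j} η_θ for x ∈ M (integration along any path from the basepoint). Then H_j ∘ τ_n = n_j + H_j for all n ∈ ℤ^d, and for every multi-index α and every f ∈ C_c^∞(M), the θ-derivative of the Floquet component satisfies ∂_θ^α f_θ = (−i)^{|α|} (H^α f)_θ, where H^α := Π_j H_j^{α_j}. -/

import Mathlib

open scoped Real

open Complex Filter in
private noncomputable def lin7 {d : ℕ} (n : Fin d → ℤ) : (Fin d → ℝ) →L[ℝ] ℝ :=
  ∑ i, (n i : ℝ) • ContinuousLinearMap.proj i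

private lemma lin7_apply {d : ℕ} (n : Fin d → ℤ) (θ : Fin d → ℝ) :
    lin7 n θ = ∑ i, (n i : ℝ) * θ i := by
  simp [lin7]

private lemma lin7_single {d : ℕ} (n : Fin d → ℤ) (j : Fin d) :
    lin7 n (Pi.single j 1) = (n j : ℝ) := by
  rw [lin7_apply]
  rw [Finset.sum_eq_single j]
  · simp
  · intro i _ hij; simp [Pi.single_apply, hij]
  · simp

private lemma hasFDerivAt_lin7 {d : ℕ} (n : Fin d → ℤ) (θ : Fin d → ℝ) :
    HasFDerivAt (fun θ' : Fin d → ℝ => ∑ i, (n i : ℝ) * θ' i) (lin7 n) θ := by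
  have h : (fun θ' : Fin d → ℝ => ∑ i, (n i : ℝ) * θ' i) = ⇑(lin7 n) := by
    ext θ'; rw [lin7_apply]
  rw [h]
  exact (lin7 n).hasFDerivAt

private lemma hasFDerivAt_exp7 {d : ℕ} (c : ℂ) (n : Fin d → ℤ) (θ : Fin d → ℝ) :
    HasFDerivAt (fun θ' : Fin d → ℝ =>
        Complex.exp (c * ((∑ i, (n i : ℝ) * θ' i : ℝ) : ℂ)))
      ((Complex.exp (c * ((∑ i, (n i : ℝ) * θ i : ℝ) : ℂ)) * c) •
        (Complex.ofRealCLM.comp (lin7 n))) θ := by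
  have h1 : HasFDerivAt (fun θ' : Fin d → ℝ => ((∑ i, (n i : ℝ) * θ' i : ℝ) : ℂ))
      (Complex.ofRealCLM.comp (lin7 n)) θ :=
    Complex.ofRealCLM.hasFDerivAt.comp θ (hasFDerivAt_lin7 n θ)
  have h2 := (h1.const_mul c).cexp
  rw [smul_smul] at h2
  exact h2

/-- Partial derivative in the `j`-th coordinate direction of `θ ∈ ℝ^d`. -/
noncomputable def pderiv7 {d : ℕ} (j : Fin d) (g : (Fin d → ℝ) → ℂ) :
    (Fin d → ℝ) → ℂ :=
  fun θ => fderiv ℝ g θ (Pi.single j 1)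

/-- Iterated partial derivatives along a list of coordinate directions
(a multi-index `α` corresponds to a list containing `j` with multiplicity `α_j`). -/
noncomputable def pderivList7 {d : ℕ} (L : List (Fin d)) (g : (Fin d → ℝ) → ℂ) :
    (Fin d → ℝ) → ℂ :=
  L.foldr pderiv7 g

theorem stmt_7
    {M : Type*} [TopologicalSpace M]
    {d : ℕ}
    -- deck transformations of the `ℤ^d`-cover and proper discontinuity
    (τ : (Fin d → ℤ) → M ≃ₜ M)
    (hτ : ∀ m n : Fin d → ℤ, τ (m + n) = (τ n).trans (τ m))
    (hproper : ∀ K : Set M, IsCompact K →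
      {n : Fin d → ℤ | ((τ n) '' K ∩ K).Nonempty}.Finite)
    -- the open (contractible) parameter set `U ⊂ U(1)^d`
    (U : Set (Fin d → ℝ)) (hU : IsOpen U) (hUne : U.Nonempty)
    -- the family of unit-modulus equivariant functions `s_θ`
    (s : (Fin d → ℝ) → M → ℂ)
    (hsnorm : ∀ θ ∈ U, ∀ x : M, ‖s θ x‖ = 1)
    (hseq : ∀ θ ∈ U, ∀ (n : Fin d → ℤ) (x : M),
      s θ ((τ n) x) = Complex.exp (Complex.I * ((∑ i, (n i : ℝ) * θ i) : ℝ)) * s θ x)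
    (hssmooth : ∀ x : M, ContDiffOn ℝ (⊤ : ℕ∞) (fun θ => s θ x) U)
    -- `H_j(x) = ∫_{x̂₀}^x π^* ∂_{θ_j} η_θ`, characterized by `s_θ⁻¹ ∂_{θ_j} s_θ = i H_j`
    (H : Fin d → M → ℝ)
    (hH : ∀ (j : Fin d) (x : M), ∀ θ ∈ U,
      pderiv7 j (fun θ' => s θ' x) θ = Complex.I * (H j x : ℝ) * s θ x)
    -- `f ∈ C_c^∞(M)` (compactly supported)
    (f : M → ℂ) (hf : Continuous f) (hsupp : HasCompactSupport f) :
    -- (a) `H_j ∘ τ_n = n_j + H_j`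
    (∀ (j : Fin d) (n : Fin d → ℤ) (x : M), H j ((τ n) x) = n j + H j x) ∧
    -- (b) `∂_θ^α f_θ = (−i)^{|α|} (H^α f)_θ` for every multi-index `α`
    (∀ (L : List (Fin d)) (x : M), ∀ θ ∈ U,
      pderivList7 L
        (fun θ' => (∑' n : Fin d → ℤ,
            f ((τ n) x) * Complex.exp (-Complex.I * ((∑ i, (n i : ℝ) * θ' i) : ℝ)))
          / s θ' x) θ
      = (-Complex.I) ^ L.length *
        ((∑' n : Fin d → ℤ,
            ((L.map fun j => (H j ((τ n) x) : ℂ)).prod) * f ((τ n) x) *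
              Complex.exp (-Complex.I * ((∑ i, (n i : ℝ) * θ i) : ℝ)))
          / s θ x)) := by
  classical
  obtain ⟨θ₀, hθ₀⟩ := hUne
  have hsne : ∀ θ ∈ U, ∀ x : M, s θ x ≠ 0 := by
    intro θ hθ x h
    have := hsnorm θ hθ x; rw [h] at this; simp at this
  have hsdiff : ∀ (x : M), ∀ θ ∈ U,
      HasFDerivAt (fun θ' => s θ' x) (fderiv ℝ (fun θ' => s θ' x) θ) θ := by
    intro x θ hθ
    exact (((hssmooth x).differentiableOn (by simp)).differentiableAt
      (hU.mem_nhds hθ)).hasFDerivAt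
  have ha : ∀ (j : Fin d) (n : Fin d → ℤ) (x : M), H j ((τ n) x) = n j + H j x := by
    intro j n x
    have hs := hsdiff x θ₀ hθ₀
    have he := hasFDerivAt_exp7 Complex.I n θ₀
    have hm := he.fun_mul hs
    have heq : fderiv ℝ (fun θ' => s θ' ((τ n) x)) θ₀
        = fderiv ℝ (fun θ' => Complex.exp (Complex.I * ((∑ i, (n i : ℝ) * θ' i : ℝ) : ℂ))
            * s θ' x) θ₀ :=
      Filter.EventuallyEq.fderiv_eq (Filter.eventually_of_mem (hU.mem_nhds hθ₀)
        (fun θ hθ => hseq θ hθ n x))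
    have h1 : fderiv ℝ (fun θ' => s θ' ((τ n) x)) θ₀ (Pi.single j 1)
        = Complex.I * (H j ((τ n) x) : ℝ) * s θ₀ ((τ n) x) := hH j _ θ₀ hθ₀
    have h2 : fderiv ℝ (fun θ' => s θ' x) θ₀ (Pi.single j 1)
        = Complex.I * (H j x : ℝ) * s θ₀ x := hH j x θ₀ hθ₀
    rw [heq, hm.fderiv] at h1
    simp only [ContinuousLinearMap.add_apply, ContinuousLinearMap.smul_apply,
      ContinuousLinearMap.coe_comp', Function.comp_apply, lin7_single,
      Complex.ofRealCLM_apply, smul_eq_mul, h2] at h1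
    have hsτ := hseq θ₀ hθ₀ n x
    rw [hsτ] at h1
    set E := Complex.exp (Complex.I * ((∑ i, (n i : ℝ) * θ₀ i : ℝ) : ℂ)) with hE
    have hEne : E ≠ 0 := Complex.exp_ne_zero _
    have hs0 : s θ₀ x ≠ 0 := hsne θ₀ hθ₀ x
    have hkey : (Complex.I * E * s θ₀ x) * ((H j ((τ n) x) : ℝ) : ℂ)
        = (Complex.I * E * s θ₀ x) * (((n j : ℝ) : ℂ) + ((H j x : ℝ) : ℂ)) := by
      linear_combination -h1
    have hc := mul_left_cancel₀
      (mul_ne_zero (mul_ne_zero Complex.I_ne_zero hEne) hs0) hkey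
    exact_mod_cast hc
  refine ⟨ha, ?_⟩
  intro L x
  have hK : IsCompact (tsupport f ∪ {x}) := hsupp.union isCompact_singleton
  have hfin : {n : Fin d → ℤ | f ((τ n) x) ≠ 0}.Finite := by
    apply (hproper _ hK).subset
    intro n hn
    exact ⟨(τ n) x, ⟨x, Or.inr rfl, rfl⟩, Or.inl (subset_tsupport f hn)⟩
  set T := hfin.toFinset with hTdef
  have hT : ∀ n ∉ T, f ((τ n) x) = 0 := by
    intro n hn
    by_contra h
    exact hn (hfin.mem_toFinset.mpr h)
  set G : (Fin d → ℝ) → ℂ := fun θ' => (∑ n ∈ T, f ((τ n) x) *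
      Complex.exp (-Complex.I * ((∑ i, (n i : ℝ) * θ' i : ℝ) : ℂ))) / s θ' x with hG
  have hgfun : (fun θ' => (∑' n : Fin d → ℤ,
        f ((τ n) x) * Complex.exp (-Complex.I * ((∑ i, (n i : ℝ) * θ' i) : ℝ)))
        / s θ' x) = G := by
    funext θ'
    rw [hG]
    congr 1
    refine tsum_eq_sum ?_
    intro n hn
    rw [hT n hn, zero_mul]
  have hnum2 : ∀ (L' : List (Fin d)) (θ' : Fin d → ℝ),
      (∑' n : Fin d → ℤ, ((L'.map fun j => (H j ((τ n) x) : ℂ)).prod) * f ((τ n) x) *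
        Complex.exp (-Complex.I * ((∑ i, (n i : ℝ) * θ' i : ℝ) : ℂ)))
      = ∑ n ∈ T, ((L'.map fun j => (H j ((τ n) x) : ℂ)).prod) * f ((τ n) x) *
        Complex.exp (-Complex.I * ((∑ i, (n i : ℝ) * θ' i : ℝ) : ℂ)) := by
    intro L' θ'
    refine tsum_eq_sum ?_
    intro n hn
    rw [hT n hn, mul_zero, zero_mul]
  have main : ∀ (L' : List (Fin d)), ∀ θ ∈ U, pderivList7 L' G θ
      = (-Complex.I) ^ L'.length *
        ((∑ n ∈ T, ((L'.map fun j => (H j ((τ n) x) : ℂ)).prod) * f ((τ n) x) *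
          Complex.exp (-Complex.I * ((∑ i, (n i : ℝ) * θ i : ℝ) : ℂ))) / s θ x) := by
    intro L'
    induction L' with
    | nil =>
      intro θ hθ
      simp [pderivList7, hG]
    | cons j L' ih =>
      intro θ hθ
      show fderiv ℝ (pderivList7 L' G) θ (Pi.single j 1) = _
      have hEq : pderivList7 L' G =ᶠ[nhds θ] (fun θ' => (-Complex.I) ^ L'.length *
          ((∑ n ∈ T, ((L'.map fun j => (H j ((τ n) x) : ℂ)).prod) * f ((τ n) x) *
            Complex.exp (-Complex.I * ((∑ i, (n i : ℝ) * θ' i : ℝ) : ℂ))) / s θ' x)) :=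
        Filter.eventually_of_mem (hU.mem_nhds hθ) (fun θ' hθ' => ih θ' hθ')
      rw [hEq.fderiv_eq]
      set c := (-Complex.I) ^ L'.length with hc
      set a : (Fin d → ℤ) → ℂ :=
        fun n => ((L'.map fun j => (H j ((τ n) x) : ℂ)).prod) * f ((τ n) x) with ha'
      have hs := hsdiff x θ hθ
      have hs0 : s θ x ≠ 0 := hsne θ hθ x
      have hinv : HasFDerivAt (fun θ' => (s θ' x)⁻¹)
          (((ContinuousLinearMap.smulRight (1 : ℂ →L[ℂ] ℂ)
              (-(s θ x ^ 2)⁻¹)).restrictScalars ℝ).comp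
            (fderiv ℝ (fun θ' => s θ' x) θ)) θ :=
        ((hasFDerivAt_inv hs0).restrictScalars ℝ).comp θ hs
      have hNum : HasFDerivAt (fun θ' => ∑ n ∈ T, a n *
            Complex.exp (-Complex.I * ((∑ i, (n i : ℝ) * θ' i : ℝ) : ℂ)))
          (∑ n ∈ T, a n • ((Complex.exp (-Complex.I *
              ((∑ i, (n i : ℝ) * θ i : ℝ) : ℂ)) * (-Complex.I)) •
            (Complex.ofRealCLM.comp (lin7 n)))) θ :=
        HasFDerivAt.fun_sum (fun n _ => (hasFDerivAt_exp7 (-Complex.I) n θ).const_mul (a n))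
      have htot : HasFDerivAt (fun θ' => c * ((∑ n ∈ T, a n *
            Complex.exp (-Complex.I * ((∑ i, (n i : ℝ) * θ' i : ℝ) : ℂ))) * (s θ' x)⁻¹))
          (c • ((∑ n ∈ T, a n *
              Complex.exp (-Complex.I * ((∑ i, (n i : ℝ) * θ i : ℝ) : ℂ))) •
                (((ContinuousLinearMap.smulRight (1 : ℂ →L[ℂ] ℂ)
                    (-(s θ x ^ 2)⁻¹)).restrictScalars ℝ).comp
                  (fderiv ℝ (fun θ' => s θ' x) θ))
            + (s θ x)⁻¹ • (∑ n ∈ T, a n • ((Complex.exp (-Complex.I *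
                ((∑ i, (n i : ℝ) * θ i : ℝ) : ℂ)) * (-Complex.I)) •
              (Complex.ofRealCLM.comp (lin7 n)))))) θ :=
        (hNum.mul hinv).const_mul c
      simp only [div_eq_mul_inv]
      rw [htot.fderiv]
      have hDs : fderiv ℝ (fun θ' => s θ' x) θ (Pi.single j 1)
          = Complex.I * (H j x : ℝ) * s θ x := hH j x θ hθ
      simp only [ContinuousLinearMap.smul_apply, ContinuousLinearMap.add_apply,
        ContinuousLinearMap.coe_comp', Function.comp_apply,
        ContinuousLinearMap.coe_restrictScalars', ContinuousLinearMap.smulRight_apply,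
        ContinuousLinearMap.one_apply, ContinuousLinearMap.sum_apply, lin7_single,
        Complex.ofRealCLM_apply, smul_eq_mul, hDs, List.map_cons, List.prod_cons,
        List.length_cons]
      have hre : ∑ n ∈ T, (H j ((τ n) x) : ℂ) * (L'.map fun j => (H j ((τ n) x) : ℂ)).prod
            * f ((τ n) x) *
            Complex.exp (-Complex.I * ((∑ i, (n i : ℝ) * θ i : ℝ) : ℂ))
          = (∑ n ∈ T, ((n j : ℝ) : ℂ) * (a n *
              Complex.exp (-Complex.I * ((∑ i, (n i : ℝ) * θ i : ℝ) : ℂ))))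
            + ((H j x : ℝ) : ℂ) * ∑ n ∈ T, a n *
              Complex.exp (-Complex.I * ((∑ i, (n i : ℝ) * θ i : ℝ) : ℂ)) := by
        rw [Finset.mul_sum, ← Finset.sum_add_distrib]
        refine Finset.sum_congr rfl fun n _ => ?_
        have hcast : (H j ((τ n) x) : ℂ) = ((n j : ℝ) : ℂ) + ((H j x : ℝ) : ℂ) := by
          rw [ha j n x]; push_cast; ring
        rw [hcast, ha']
        ring
      have hder : ∑ n ∈ T, a n * (Complex.exp (-Complex.I *
            ((∑ i, (n i : ℝ) * θ i : ℝ) : ℂ)) * (-Complex.I) * ((n j : ℝ) : ℂ))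
          = (-Complex.I) * ∑ n ∈ T, ((n j : ℝ) : ℂ) * (a n *
              Complex.exp (-Complex.I * ((∑ i, (n i : ℝ) * θ i : ℝ) : ℂ))) := by
        rw [Finset.mul_sum]
        refine Finset.sum_congr rfl fun n _ => ?_
        ring
      rw [hder, hre, pow_succ]
      field_simp
      ring
  intro θ hθ
  rw [hgfun, main L θ hθ, hnum2 L θ]
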